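/- Let n, R ∈ ℕ, let A be a real symmetric n×n matrix all of whose eigenvalues are negative, let B be a real n×R matrix, and let α₁, …, α_j be negative real numbers. Define Cᵢ := (A + αᵢI)⁻¹·(A − αᵢI) and Bᵢ := √(−2αᵢ)·(A + αᵢI)⁻¹·B, the ADI iterates X₀ := 0, Xᵢ := Cᵢ·Xᵢ₋₁·Cᵢᵀ + Bᵢ·Bᵢᵀ, and let V* solve A·V* + V*·Aᵀ + B·Bᵀ = 0. Then ‖X_j − V*‖₂ ≤ ‖V*‖₂ · ( max over eigenvalues μ of A of ∏_{i=1}^{j} |μ − αᵢ| / |μ + αᵢ| )². -/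
import Mathlib

open Matrix
open scoped Matrix.Norms.L2Operator

/-- The spectral norm (`2`-norm) of a real square matrix: its operator norm as a linear
map between Euclidean (`ℓ²`) spaces. -/
noncomputable def specNorm {n : ℕ} (M : Matrix (Fin n) (Fin n) ℝ) : ℝ :=
  ‖Matrix.toEuclideanCLM (𝕜 := ℝ) M‖

lemma specNorm_eq_l2norm {n : ℕ} (M : Matrix (Fin n) (Fin n) ℝ) : specNorm M = ‖M‖ := rfl

lemma norm_diag_le {n : ℕ} (d : Fin n → ℝ) (c : ℝ) (hc : 0 ≤ c) (h : ∀ k, |d k| ≤ c) :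
    ‖(Matrix.diagonal d : Matrix (Fin n) (Fin n) ℝ)‖ ≤ c := by
  rw [Matrix.cstar_norm_def]
  apply ContinuousLinearMap.opNorm_le_bound _ hc
  intro x
  have hx : ∀ i, (Matrix.toEuclideanCLM (𝕜 := ℝ) (Matrix.diagonal d) x) i = d i * x i := by
    intro i
    have := Matrix.ofLp_toEuclideanCLM (Matrix.diagonal d) x
    have h2 := congrFun this i
    simpa [Matrix.toLin'_apply, Matrix.mulVec_diagonal] using h2
  have h1 : ‖Matrix.toEuclideanCLM (𝕜 := ℝ) (Matrix.diagonal d) x‖ ^ 2 ≤ (c * ‖x‖) ^ 2 := by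
    rw [EuclideanSpace.norm_eq, Real.sq_sqrt (by positivity), mul_pow, EuclideanSpace.norm_eq,
      Real.sq_sqrt (by positivity), Finset.mul_sum]
    apply Finset.sum_le_sum
    intro i _
    rw [hx i]
    have := h i
    have hxi : (0:ℝ) ≤ ‖x i‖^2 := by positivity
    calc ‖d i * x i‖ ^ 2 = |d i|^2 * ‖x i‖^2 := by
          rw [norm_mul]; ring_nf; simp [Real.norm_eq_abs]; ring
      _ ≤ c^2 * ‖x i‖^2 := by
          nlinarith [abs_nonneg (d i), sq_nonneg (‖x i‖),
            mul_le_mul_of_nonneg_right (mul_le_mul this this (abs_nonneg _) hc) hxi]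
  nlinarith [norm_nonneg (Matrix.toEuclideanCLM (𝕜 := ℝ) (Matrix.diagonal d) x),
    mul_nonneg hc (norm_nonneg x)]

/-- ADI convergence estimate in the symmetric case: for real symmetric `A`
with negative eigenvalues, negative real shifts `α₁, …, α_j`, ADI iterates `X₀ = 0`,
`Xᵢ = Cᵢ Xᵢ₋₁ Cᵢᵀ + Bᵢ Bᵢᵀ` and `V*` solving `A V* + V* Aᵀ + B Bᵀ = 0`, one has
`‖X_j − V*‖₂ ≤ ‖V*‖₂ (max_{μ ∈ spec A} ∏ᵢ |μ − αᵢ|/|μ + αᵢ|)²`. -/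
theorem adi_convergence_symmetric (n R j : ℕ)
    (A : Matrix (Fin n) (Fin n) ℝ) (hA : A.IsHermitian)
    (heig : ∀ k, hA.eigenvalues k < 0)
    (B : Matrix (Fin n) (Fin R) ℝ)
    (α : ℕ → ℝ) (hα : ∀ i, 1 ≤ i → i ≤ j → α i < 0)
    (C : ℕ → Matrix (Fin n) (Fin n) ℝ)
    (hC : ∀ i, C i = (A + α i • 1)⁻¹ * (A - α i • 1))
    (Bm : ℕ → Matrix (Fin n) (Fin R) ℝ)
    (hBm : ∀ i, Bm i = Real.sqrt (-2 * α i) • ((A + α i • 1)⁻¹ * B))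
    (X : ℕ → Matrix (Fin n) (Fin n) ℝ)
    (hX0 : X 0 = 0)
    (hX : ∀ i, 1 ≤ i → i ≤ j → X i = C i * X (i - 1) * (C i)ᵀ + Bm i * (Bm i)ᵀ)
    (Vstar : Matrix (Fin n) (Fin n) ℝ)
    (hVstar : A * Vstar + Vstar * Aᵀ + B * Bᵀ = 0) :
    specNorm (X j - Vstar) ≤ specNorm Vstar *
      (⨆ k : Fin n, ∏ i ∈ Finset.Icc 1 j,
        |hA.eigenvalues k - α i| / |hA.eigenvalues k + α i|) ^ 2 := by
  classical
  set lam := hA.eigenvalues with hlam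
  set U : Matrix (Fin n) (Fin n) ℝ := (hA.eigenvectorUnitary : Matrix (Fin n) (Fin n) ℝ) with hUdef
  have hUmem : U ∈ Matrix.unitaryGroup (Fin n) ℝ := hA.eigenvectorUnitary.2
  have hU1 : U * star U = 1 := Matrix.mem_unitaryGroup_iff.mp hUmem
  have hU2 : star U * U = 1 := Matrix.mem_unitaryGroup_iff'.mp hUmem
  have hspec : A = U * Matrix.diagonal lam * star U := by
    simpa [RCLike.ofReal_real_eq_id] using hA.spectral_theorem
  have hAT : Aᵀ = A := by
    rw [← Matrix.conjTranspose_eq_transpose_of_trivial]; exact hA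
  have hstarU : star U = Uᵀ := by
    rw [Matrix.star_eq_conjTranspose, Matrix.conjTranspose_eq_transpose_of_trivial]
  -- conjugation multiplicativity
  have hmul : ∀ G H : Matrix (Fin n) (Fin n) ℝ,
      (U * G * star U) * (U * H * star U) = U * (G * H) * star U := by
    intro G H
    calc (U * G * star U) * (U * H * star U)
        = U * G * (star U * U) * H * star U := by simp only [mul_assoc]
      _ = U * (G * H) * star U := by rw [hU2]; simp only [mul_one, mul_assoc]
  -- shifts
  have hshift : ∀ s : ℝ, A + s • 1 = U * Matrix.diagonal (fun k => lam k + s) * star U := by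
    intro s
    have hd : Matrix.diagonal (fun k => lam k + s) = Matrix.diagonal lam + s • 1 := by
      rw [Matrix.smul_one_eq_diagonal, Matrix.diagonal_add]
    rw [hd, mul_add, add_mul, ← hspec, mul_smul_comm, smul_mul_assoc, mul_one, hU1]
  have hsub : ∀ s : ℝ, A - s • 1 = U * Matrix.diagonal (fun k => lam k - s) * star U := by
    intro s
    have hd : Matrix.diagonal (fun k => lam k - s) = Matrix.diagonal lam - s • 1 := by
      rw [Matrix.smul_one_eq_diagonal, Matrix.diagonal_sub]
    rw [hd, mul_sub, sub_mul, ← hspec, mul_smul_comm, smul_mul_assoc, mul_one, hU1]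
  -- inverse of conjugated diagonal
  have hinvd : ∀ e : Fin n → ℝ, (∀ k, e k ≠ 0) →
      (U * Matrix.diagonal e * star U) * (U * Matrix.diagonal (fun k => (e k)⁻¹) * star U) = 1 := by
    intro e he
    rw [hmul, Matrix.diagonal_mul_diagonal]
    have : (fun k => e k * (e k)⁻¹) = fun _ : Fin n => (1:ℝ) := by
      funext k; exact mul_inv_cancel₀ (he k)
    rw [this, Matrix.diagonal_one, mul_one, hU1]
  have hinv : ∀ e : Fin n → ℝ, (∀ k, e k ≠ 0) →
      (U * Matrix.diagonal e * star U)⁻¹ = U * Matrix.diagonal (fun k => (e k)⁻¹) * star U := by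
    intro e he
    exact Matrix.inv_eq_right_inv (hinvd e he)
  -- nonvanishing denominators
  have hne : ∀ i, 1 ≤ i → i ≤ j → ∀ k, lam k + α i ≠ 0 := by
    intro i h1 h2 k
    have := heig k
    have := hα i h1 h2
    intro h; rw [hlam] at *; linarith
  -- diagonal form of C i
  have hCd : ∀ i, 1 ≤ i → i ≤ j →
      C i = U * Matrix.diagonal (fun k => (lam k - α i) / (lam k + α i)) * star U := by
    intro i h1 h2
    rw [hC, hshift, hsub, hinv _ (hne i h1 h2), hmul, Matrix.diagonal_mul_diagonal]
    have hfun : (fun k => (lam k + α i)⁻¹ * (lam k - α i)) =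
        fun k => (lam k - α i) / (lam k + α i) := by
      funext k; rw [div_eq_inv_mul]
    rw [hfun]
  -- the inverse facts for M i
  have hML : ∀ i, 1 ≤ i → i ≤ j → (A + α i • 1)⁻¹ * (A + α i • 1) = 1 := by
    intro i h1 h2
    rw [hshift, hinv _ (hne i h1 h2), hmul, Matrix.diagonal_mul_diagonal]
    have : (fun k => (lam k + α i)⁻¹ * (lam k + α i)) = fun _ : Fin n => (1:ℝ) := by
      funext k; exact inv_mul_cancel₀ (hne i h1 h2 k)
    rw [this, Matrix.diagonal_one, mul_one, hU1]
  have hMR : ∀ i, 1 ≤ i → i ≤ j → (A + α i • 1) * (A + α i • 1)⁻¹ = 1 := by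
    intro i h1 h2
    rw [hshift, hinv _ (hne i h1 h2)]
    exact hinvd _ (hne i h1 h2)
  -- Lyapunov rewritten
  have hAV : A * Vstar + Vstar * A = -(B * Bᵀ) := by
    have h := hVstar
    rw [hAT] at h
    exact eq_neg_of_add_eq_zero_left h
  -- transpose facts
  have hMT : ∀ s : ℝ, (A + s • 1)ᵀ = A + s • 1 := by
    intro s
    rw [Matrix.transpose_add, hAT, Matrix.transpose_smul, Matrix.transpose_one]
  have hNT : ∀ s : ℝ, (A - s • 1)ᵀ = A - s • 1 := by
    intro s
    rw [Matrix.transpose_sub, hAT, Matrix.transpose_smul, Matrix.transpose_one]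
  have hMinvT : ∀ i, 1 ≤ i → i ≤ j → ((A + α i • 1)⁻¹)ᵀ = (A + α i • 1)⁻¹ := by
    intro i h1 h2
    rw [Matrix.transpose_nonsing_inv, hMT]
  -- the key Lyapunov identity
  have hLyap : ∀ i, 1 ≤ i → i ≤ j → C i * Vstar * (C i)ᵀ + Bm i * (Bm i)ᵀ = Vstar := by
    intro i h1 h2
    obtain ⟨s, hs⟩ : ∃ s, s = α i := ⟨_, rfl⟩
    obtain ⟨M, hM⟩ : ∃ M', M' = A + s • 1 := ⟨_, rfl⟩
    obtain ⟨N, hN⟩ : ∃ N', N' = A - s • 1 := ⟨_, rfl⟩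
    have hML' : M⁻¹ * M = 1 := by rw [hM, hs]; exact hML i h1 h2
    have hMR' : M * M⁻¹ = 1 := by rw [hM, hs]; exact hMR i h1 h2
    have hCi : C i = M⁻¹ * N := by rw [hM, hN, hs]; exact hC i
    have hNsym : Nᵀ = N := by rw [hN]; exact hNT s
    have hMiT : (M⁻¹)ᵀ = M⁻¹ := by rw [hM, hs]; exact hMinvT i h1 h2
    have hCiT : (C i)ᵀ = N * M⁻¹ := by
      rw [hCi, Matrix.transpose_mul, hNsym, hMiT]
    have hsneg : s < 0 := by rw [hs]; exact hα i h1 h2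
    have hBmi : Bm i * (Bm i)ᵀ = (-2 * s) • (M⁻¹ * (B * Bᵀ) * M⁻¹) := by
      rw [hM, hs, hBm]
      rw [Matrix.transpose_smul, Matrix.smul_mul, Matrix.mul_smul, smul_smul,
        Real.mul_self_sqrt (by nlinarith [hα i h1 h2])]
      congr 1
      rw [Matrix.transpose_mul, hMinvT i h1 h2]
      simp only [Matrix.mul_assoc]
    -- core algebraic identity
    have hcore : M * Vstar * M - N * Vstar * N = (2 * s) • (A * Vstar + Vstar * A) := by
      rw [hM, hN]
      simp only [add_mul, mul_add, sub_mul, mul_sub, Matrix.smul_mul, Matrix.mul_smul,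
        one_mul, mul_one, smul_smul, smul_add, smul_sub]
      module
    have hMVM : M * (C i * Vstar * (C i)ᵀ + Bm i * (Bm i)ᵀ) * M = M * Vstar * M := by
      rw [hCiT, hCi, hBmi, mul_add, add_mul]
      have e1 : M * (M⁻¹ * N * Vstar * (N * M⁻¹)) * M = N * Vstar * N := by
        simp only [← mul_assoc]
        rw [hMR', one_mul, mul_assoc _ M⁻¹ M, hML', mul_one]
      have e2 : M * ((-2 * s) • (M⁻¹ * (B * Bᵀ) * M⁻¹)) * M = (-2 * s) • (B * Bᵀ) := by
        rw [Matrix.mul_smul, Matrix.smul_mul]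
        congr 1
        simp only [← mul_assoc]
        rw [hMR', one_mul, mul_assoc _ M⁻¹ M, hML', mul_one]
      rw [e1, e2]
      have hns : (-2 * s) • (B * Bᵀ) = -((2 * s) • (B * Bᵀ)) := by
        rw [← neg_smul]; congr 1; ring
      rw [hns]
      have hcb := hcore
      rw [hAV] at hcb
      rw [smul_neg] at hcb
      have hcb2 : M * Vstar * M = -((2*s) • (B * Bᵀ)) + N * Vstar * N := sub_eq_iff_eq_add.mp hcb
      rw [hcb2]
      abel
    calc C i * Vstar * (C i)ᵀ + Bm i * (Bm i)ᵀ
        = M⁻¹ * (M * (C i * Vstar * (C i)ᵀ + Bm i * (Bm i)ᵀ) * M) * M⁻¹ := by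
          simp only [← mul_assoc]
          rw [hML', one_mul]
          rw [mul_assoc _ M M⁻¹, hMR', mul_one]
      _ = M⁻¹ * (M * Vstar * M) * M⁻¹ := by rw [hMVM]
      _ = Vstar := by
          simp only [← mul_assoc]
          rw [hML', one_mul, mul_assoc _ M M⁻¹, hMR', mul_one]
  -- the product matrices Q i
  set g : ℕ → Fin n → ℝ :=
    (fun i k => ∏ t ∈ Finset.Icc 1 i, (lam k - α t) / (lam k + α t)) with hg
  have hQT : ∀ d : Fin n → ℝ, (U * Matrix.diagonal d * star U)ᵀ =
      U * Matrix.diagonal d * star U := by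
    intro d
    rw [hstarU, Matrix.transpose_mul, Matrix.transpose_mul, Matrix.transpose_transpose,
      Matrix.diagonal_transpose, mul_assoc]
  have hkey : ∀ i, i ≤ j → X i - Vstar =
      -((U * Matrix.diagonal (g i) * star U) * Vstar * (U * Matrix.diagonal (g i) * star U)ᵀ) := by
    intro i
    induction i with
    | zero =>
      intro _
      have hg0 : g 0 = fun _ : Fin n => (1:ℝ) := by
        funext k; simp [hg]
      rw [hX0, hg0, Matrix.diagonal_one, mul_one, hU1]
      simp
    | succ i ih =>
      intro hij
      have h1 : 1 ≤ i + 1 := Nat.le_add_left 1 i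
      have hij' : i ≤ j := Nat.le_of_succ_le hij
      have hXs := hX (i + 1) h1 hij
      simp only [Nat.add_sub_cancel] at hXs
      have ihe := ih hij'
      have hstep : X (i+1) - Vstar = C (i+1) * (X i - Vstar) * (C (i+1))ᵀ := by
        rw [hXs]
        have := hLyap (i+1) h1 hij
        calc C (i+1) * X i * (C (i+1))ᵀ + Bm (i+1) * (Bm (i+1))ᵀ - Vstar
            = C (i+1) * X i * (C (i+1))ᵀ + Bm (i+1) * (Bm (i+1))ᵀ
              - (C (i+1) * Vstar * (C (i+1))ᵀ + Bm (i+1) * (Bm (i+1))ᵀ) := by rw [this]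
          _ = C (i+1) * X i * (C (i+1))ᵀ - C (i+1) * Vstar * (C (i+1))ᵀ := by abel
          _ = C (i+1) * (X i - Vstar) * (C (i+1))ᵀ := by
              rw [Matrix.mul_sub, Matrix.sub_mul]
      rw [hstep, ihe]
      have hCQ : C (i+1) * (U * Matrix.diagonal (g i) * star U) =
          U * Matrix.diagonal (g (i+1)) * star U := by
        rw [hCd (i+1) h1 hij, hmul, Matrix.diagonal_mul_diagonal]
        have hfun : (fun k => (lam k - α (i+1)) / (lam k + α (i+1)) * g i k) = g (i+1) := by
          funext k
          rw [hg]
          simp only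
          rw [Finset.prod_Icc_succ_top (Nat.le_add_left 1 i)]
          ring
        rw [hfun]
      have hCQT : (U * Matrix.diagonal (g i) * star U)ᵀ * (C (i+1))ᵀ =
          (U * Matrix.diagonal (g (i+1)) * star U)ᵀ := by
        rw [← Matrix.transpose_mul, hCQ]
      calc C (i+1) * -(U * Matrix.diagonal (g i) * star U * Vstar *
              (U * Matrix.diagonal (g i) * star U)ᵀ) * (C (i+1))ᵀ
          = -(C (i+1) * (U * Matrix.diagonal (g i) * star U) * Vstar *
              ((U * Matrix.diagonal (g i) * star U)ᵀ * (C (i+1))ᵀ)) := by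
            simp only [Matrix.mul_neg, Matrix.neg_mul, mul_assoc]
        _ = -(U * Matrix.diagonal (g (i+1)) * star U * Vstar *
              (U * Matrix.diagonal (g (i+1)) * star U)ᵀ) := by
            rw [hCQ, hCQT]
  -- now the norm estimate
  set c : ℝ := ⨆ k : Fin n, ∏ i ∈ Finset.Icc 1 j, |lam k - α i| / |lam k + α i| with hc
  have hbdd : BddAbove (Set.range fun k : Fin n =>
      ∏ i ∈ Finset.Icc 1 j, |lam k - α i| / |lam k + α i|) :=
    Set.Finite.bddAbove (Set.finite_range _)
  have hc0 : 0 ≤ c := by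
    rcases isEmpty_or_nonempty (Fin n) with h | h
    · rw [hc, Real.iSup_of_isEmpty]
    · have k0 := Classical.arbitrary (Fin n)
      refine le_trans ?_ (le_ciSup hbdd k0)
      apply Finset.prod_nonneg
      intro t _
      positivity
  have hgc : ∀ k, |g j k| ≤ c := by
    intro k
    rw [hg]
    have : |∏ t ∈ Finset.Icc 1 j, (lam k - α t) / (lam k + α t)| =
        ∏ t ∈ Finset.Icc 1 j, |lam k - α t| / |lam k + α t| := by
      rw [Finset.abs_prod]
      exact Finset.prod_congr rfl fun t _ => abs_div _ _
    rw [this]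
    exact le_ciSup hbdd k
  have hQnorm : ‖U * Matrix.diagonal (g j) * star U‖ ≤ c := by
    rw [mul_assoc]
    rw [CStarRing.norm_mem_unitary_mul (Matrix.diagonal (g j) * star U) hUmem]
    rw [CStarRing.norm_mul_mem_unitary (Matrix.diagonal (g j)) (Unitary.star_mem hUmem)]
    exact norm_diag_le _ c hc0 hgc
  have hfin := hkey j le_rfl
  rw [specNorm_eq_l2norm, specNorm_eq_l2norm, hfin, norm_neg]
  set Q := U * Matrix.diagonal (g j) * star U with hQ
  have hQTQ : Qᵀ = Q := hQT (g j)
  have h1 : ‖Q * Vstar * Qᵀ‖ ≤ ‖Q * Vstar‖ * ‖Qᵀ‖ := Matrix.l2_opNorm_mul _ _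
  have h2 : ‖Q * Vstar‖ ≤ ‖Q‖ * ‖Vstar‖ := Matrix.l2_opNorm_mul _ _
  have h3 : ‖Qᵀ‖ = ‖Q‖ := by rw [hQTQ]
  calc ‖Q * Vstar * Qᵀ‖ ≤ ‖Q * Vstar‖ * ‖Qᵀ‖ := h1
    _ ≤ ‖Q‖ * ‖Vstar‖ * ‖Q‖ := by
        rw [h3]; exact mul_le_mul_of_nonneg_right h2 (norm_nonneg Q)
    _ ≤ c * ‖Vstar‖ * c := by
        have e1 := mul_le_mul_of_nonneg_right
          (mul_le_mul_of_nonneg_right hQnorm (norm_nonneg Vstar)) (norm_nonneg Q)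
        have e2 := mul_le_mul_of_nonneg_left hQnorm (mul_nonneg hc0 (norm_nonneg Vstar))
        calc ‖Q‖ * ‖Vstar‖ * ‖Q‖ ≤ c * ‖Vstar‖ * ‖Q‖ := e1
          _ ≤ c * ‖Vstar‖ * c := by
              simpa [mul_assoc] using e2
    _ = ‖Vstar‖ * c ^ 2 := by ring
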